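/- For every integer T ≥ 1 there exist measures μ₀^T ∈ M₊(X⁰) and ν^T ∈ M₊(X) such that the restriction of the Lebesgue measure to X^T solves the discrete Liouville equation λ_{X^T} + ν^T = f_#ν^T + μ₀^T, and moreover the masses satisfy μ₀^T(ℝ^n) = Σ_{t=0}^{T} vol Y^t = vol X^T and ν^T(ℝ^n) = Σ_{t=0}^{T} t · vol Y^t. -/

import Mathlib

/-!
Split `X^T` into the disjoint pieces `Y^t = f^t(X⁰) \ X^{t-1}`. Since `f^t` is differentiable it
maps Lebesgue-null sets to null sets, so `λ_{Y^t} ≪ f^t_# λ_{X⁰}`, and pulling the Radon–Nikodym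
density back along `f^t` gives `μ_t` on `X⁰` with `f^t_# μ_t = λ_{Y^t}`. With `μ₀ = ∑ μ_t` and
`ν = ∑_t ∑_{k<t} f^k_# μ_t` the Liouville equation is, piece by piece, the telescoping identity
`f^t_# μ_t + ∑_{k<t} f^k_# μ_t = ∑_{k≤t} f^k_# μ_t = f_# (∑_{k<t} f^k_# μ_t) + μ_t`.
-/

open MeasureTheory Finset Function Set
open scoped ENNReal

theorem differentiable_of_forall_eval_mvPolynomial {n : ℕ} {f : (Fin n → ℝ) → Fin n → ℝ}
    (hf : ∀ i, ∃ p : MvPolynomial (Fin n) ℝ, ∀ x, f x i = MvPolynomial.eval x p) :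
    Differentiable ℝ f := by
  refine differentiable_pi.2 fun i => ?_
  obtain ⟨p, hp⟩ := hf i
  rw [show (f · i) = (MvPolynomial.eval · p) from funext hp, ← differentiableOn_univ]
  exact (AnalyticOnNhd.eval_mvPolynomial p).differentiableOn

theorem Set.eq_disjointed_of_eq_diff_biUnion {α : Type*} {A Y : ℕ → Set α} (h0 : Y 0 = A 0)
    (h : ∀ t, 1 ≤ t → Y t = A t \ ⋃ i ∈ Finset.range t, A i) : Y = disjointed A := by
  funext t
  rcases t with _ | t
  · rw [h0, disjointed_zero]
  · rw [h _ t.succ_pos, disjointed_add_one, partialSups_eq_biUnion_range]; rfl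

namespace MeasureTheory.Measure

variable {α β : Type*} [MeasurableSpace α] [MeasurableSpace β]

theorem restrict_partialSups_eq_sum_restrict_disjointed (μ : Measure α) {s : ℕ → Set α}
    (hs : ∀ i, MeasurableSet (s i)) (n : ℕ) :
    μ.restrict (partialSups s n) = ∑ i ∈ range (n + 1), μ.restrict (disjointed s i) := by
  rw [← biUnion_range_succ_disjointed, restrict_biUnion_finset
    ((disjoint_disjointed s).set_pairwise _) (MeasurableSet.disjointed hs),
    sum_coe_finset (range (n + 1)) fun i => μ.restrict (disjointed s i)]

theorem map_iterate_add_sum_map_iterate (μ : Measure α) {f : α → α} (hf : Measurable f) (t : ℕ) :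
    μ.map f^[t] + ∑ k ∈ range t, μ.map f^[k] = (∑ k ∈ range t, μ.map f^[k]).map f + μ := by
  rw [map_finset_sum hf.aemeasurable, add_comm, ← sum_range_succ, sum_range_succ']
  congr 1
  · refine Finset.sum_congr rfl fun k _ => ?_
    rw [map_map hf (hf.iterate k), ← iterate_succ']
  · exact map_id

theorem sum_map_iterate_add_sum_sum_map_iterate (μ : ℕ → Measure α) {f : α → α}
    (hf : Measurable f) (s : Finset ℕ) :
    ∑ t ∈ s, (μ t).map f^[t] + ∑ t ∈ s, ∑ k ∈ range t, (μ t).map f^[k] =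
      (∑ t ∈ s, ∑ k ∈ range t, (μ t).map f^[k]).map f + ∑ t ∈ s, μ t := by
  rw [← sum_add_distrib, map_finset_sum hf.aemeasurable, ← sum_add_distrib]
  exact Finset.sum_congr rfl fun t _ => map_iterate_add_sum_map_iterate (μ t) hf t

theorem map_apply_compl_eq_zero {μ : Measure α} {g : α → β} (hg : Measurable g) {s : Set α}
    {t : Set β} (hμs : μ sᶜ = 0) (ht : MeasurableSet t) (hst : MapsTo g s t) :
    μ.map g tᶜ = 0 := by
  rw [map_apply hg ht.compl]
  exact measure_mono_null (fun x hx hxs => hx (hst hxs)) hμs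

theorem exists_absolutelyContinuous_map_eq {μ : Measure α} {ν : Measure β} {φ : α → β}
    (hφ : Measurable φ) [ν.HaveLebesgueDecomposition (μ.map φ)] (hν : ν ≪ μ.map φ) :
    ∃ ρ : Measure α, ρ ≪ μ ∧ ρ.map φ = ν := by
  refine ⟨μ.withDensity (ν.rnDeriv (μ.map φ) ∘ φ), withDensity_absolutelyContinuous _ _, ?_⟩
  conv_rhs => rw [← withDensity_rnDeriv_eq ν (μ.map φ) hν]
  ext s hs
  rw [map_apply hφ hs, withDensity_apply _ (hφ hs), withDensity_apply _ hs,
    setLIntegral_map hs (measurable_rnDeriv _ _) hφ]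
  rfl

section AddHaar

variable {E : Type*} [NormedAddCommGroup E] [NormedSpace ℝ E] [FiniteDimensional ℝ E]
  [MeasurableSpace E] [BorelSpace E] (μ : Measure E) [μ.IsAddHaarMeasure]

theorem restrict_absolutelyContinuous_map_restrict {φ : E → E} (hφ : Measurable φ)
    {s t : Set E} (hd : DifferentiableOn ℝ φ s) (hts : t ⊆ φ '' s) :
    μ.restrict t ≪ (μ.restrict s).map φ := by
  refine AbsolutelyContinuous.mk fun A hA h0 => ?_
  rw [map_apply hφ hA, restrict_apply (hφ hA)] at h0
  rw [restrict_apply hA]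
  refine measure_mono_null ?_ (addHaar_image_eq_zero_of_differentiableOn_of_addHaar_eq_zero μ
    (hd.mono inter_subset_right) h0)
  rintro y ⟨hyA, hyt⟩
  obtain ⟨x, hxs, rfl⟩ := hts hyt
  exact ⟨x, ⟨hyA, hxs⟩, rfl⟩

theorem exists_map_eq_restrict_of_subset_image {φ : E → E} (hφ : Measurable φ) {s t : Set E}
    (hd : DifferentiableOn ℝ φ s) (hsm : MeasurableSet s) (hs : μ s ≠ ∞) (hts : t ⊆ φ '' s) :
    ∃ ρ : Measure E, ρ sᶜ = 0 ∧ ρ.map φ = μ.restrict t := by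
  have : IsFiniteMeasure (μ.restrict s) := isFiniteMeasure_restrict.2 hs
  obtain ⟨ρ, hρ, hmap⟩ :=
    exists_absolutelyContinuous_map_eq hφ (μ.restrict_absolutelyContinuous_map_restrict hφ hd hts)
  exact ⟨ρ, hρ (by simp [restrict_apply hsm.compl]), hmap⟩

end AddHaar

end MeasureTheory.Measure

theorem liouville_finite_horizon_general (n : ℕ)
    (f : (Fin n → ℝ) → (Fin n → ℝ))
    (hfpoly : ∀ i, ∃ p : MvPolynomial (Fin n) ℝ, ∀ x, f x i = MvPolynomial.eval x p)
    (X0 X : Set (Fin n → ℝ)) (hX0 : IsCompact X0)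
    (hreach : (⋃ t : ℕ, f^[t] '' X0) ⊆ X)
    (XT : ℕ → Set (Fin n → ℝ))
    (hXT : ∀ T : ℕ, XT T = ⋃ t ∈ Finset.range (T + 1), f^[t] '' X0)
    (Y : ℕ → Set (Fin n → ℝ))
    (hY0 : Y 0 = X0)
    (hYt : ∀ t : ℕ, 1 ≤ t → Y t = f^[t] '' X0 \ XT (t - 1)) :
    ∀ T : ℕ, 1 ≤ T →
      ∃ μ0T νT : Measure (Fin n → ℝ),
        IsFiniteMeasure μ0T ∧ IsFiniteMeasure νT ∧
        μ0T X0ᶜ = 0 ∧ νT Xᶜ = 0 ∧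
        volume.restrict (XT T) + νT = Measure.map f νT + μ0T ∧
        μ0T Set.univ = ∑ t ∈ Finset.range (T + 1), volume (Y t) ∧
        μ0T Set.univ = volume (XT T) ∧
        νT Set.univ = ∑ t ∈ Finset.range (T + 1), (t : ℝ≥0∞) * volume (Y t) := by
  intro T _
  set A : ℕ → Set (Fin n → ℝ) := fun t => f^[t] '' X0
  have hf := differentiable_of_forall_eval_mvPolynomial hfpoly
  have hfm : ∀ t, Measurable f^[t] := fun t => (hf.iterate t).continuous.measurable
  have hA : ∀ t, IsCompact (A t) := fun t => hX0.image (hf.iterate t).continuous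
  have hY : Y = disjointed A := Set.eq_disjointed_of_eq_diff_biUnion (by simp [A, hY0])
    fun t ht => by rw [hYt t ht, hXT, Nat.sub_add_cancel ht]
  have hdec : volume.restrict (XT T) = ∑ t ∈ range (T + 1), volume.restrict (Y t) := by
    rw [hXT, ← partialSups_eq_biUnion_range, hY]
    exact volume.restrict_partialSups_eq_sum_restrict_disjointed
      (fun t => (hA t).isClosed.measurableSet) T
  choose μ hμX0 hμmap using fun t => volume.exists_map_eq_restrict_of_subset_image (hfm t)
    (hf.iterate t).differentiableOn hX0.isClosed.measurableSet hX0.measure_lt_top.ne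
    (hY ▸ disjointed_subset A t)
  have hμ : ∀ t, μ t univ = volume (Y t) := fun t => by
    rw [← preimage_univ (f := f^[t]), ← Measure.map_apply (hfm t) .univ, hμmap,
      Measure.restrict_apply_univ]
  have : ∀ t, IsFiniteMeasure (μ t) := fun t => ⟨by
    rw [hμ, hY]; exact (measure_mono (disjointed_subset A t)).trans_lt (hA t).measure_lt_top⟩
  refine ⟨∑ t ∈ range (T + 1), μ t, ∑ t ∈ range (T + 1), ∑ k ∈ range t, (μ t).map f^[k],
    inferInstance, inferInstance, by simp [hμX0], ?_, ?_, by simp [hμ], ?_, ?_⟩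
  · simp only [Measure.coe_finsetSum, Finset.sum_apply]
    refine Finset.sum_eq_zero fun t _ => Finset.sum_eq_zero fun k _ => measure_mono_null
      (compl_subset_compl.2 ((subset_iUnion A k).trans hreach))
      (Measure.map_apply_compl_eq_zero (hfm k) (hμX0 t) (hA k).isClosed.measurableSet
        (mapsTo_image _ _))
  · simp only [hdec, ← hμmap]
    exact Measure.sum_map_iterate_add_sum_sum_map_iterate μ hf.continuous.measurable _
  · rw [← Measure.restrict_apply_univ (XT T), hdec]; simp [hμ]
  · simp [Measure.map_apply (hfm _) MeasurableSet.univ, hμ]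

/-- For every `T ≥ 1` there exist `μ₀^T ∈ M₊(X⁰)` and `ν^T ∈ M₊(X)` such that
`λ_{X^T} + ν^T = f_# ν^T + μ₀^T`, with masses
`μ₀^T(ℝ^n) = ∑_{t=0}^{T} vol Y^t = vol X^T` and `ν^T(ℝ^n) = ∑_{t=0}^{T} t · vol Y^t`. -/
theorem liouville_finite_horizon (n : ℕ) (hn : 1 ≤ n)
    (f : (Fin n → ℝ) → (Fin n → ℝ))
    (hfpoly : ∀ i, ∃ p : MvPolynomial (Fin n) ℝ, ∀ x, f x i = MvPolynomial.eval x p)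
    (X0 X : Set (Fin n → ℝ)) (hX0 : IsCompact X0) (hX : IsCompact X)
    (hreach : (⋃ t : ℕ, f^[t] '' X0) ⊆ X)
    (XT : ℕ → Set (Fin n → ℝ))
    (hXT : ∀ T : ℕ, XT T = ⋃ t ∈ Finset.range (T + 1), f^[t] '' X0)
    (Y : ℕ → Set (Fin n → ℝ))
    (hY0 : Y 0 = X0)
    (hYt : ∀ t : ℕ, 1 ≤ t → Y t = f^[t] '' X0 \ XT (t - 1)) :
    ∀ T : ℕ, 1 ≤ T →
      ∃ μ0T νT : Measure (Fin n → ℝ),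
        IsFiniteMeasure μ0T ∧ IsFiniteMeasure νT ∧
        μ0T X0ᶜ = 0 ∧ νT Xᶜ = 0 ∧
        volume.restrict (XT T) + νT = Measure.map f νT + μ0T ∧
        μ0T Set.univ = ∑ t ∈ Finset.range (T + 1), volume (Y t) ∧
        μ0T Set.univ = volume (XT T) ∧
        νT Set.univ = ∑ t ∈ Finset.range (T + 1), (t : ℝ≥0∞) * volume (Y t) :=
  liouville_finite_horizon_general n f hfpoly X0 X hX0 hreach XT hXT Y hY0 hYt
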